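/- arXiv:1512.00779 — 4 statements merged into one kernel-verified Lean document; each statement's English description precedes it below -/
import Mathlib

section
/- For every positive integer k, there exists a set of 2k dipole words, each of length 6k+14, that attractively encodes the canonical signed 2k-glue function (i.e., a length-(6k+14) dipole code attractively encoding it). -/
/-!
Read a dipole word as a sequence of charges `0 ↦ +1`, `1 ↦ -1`, `⋄ ↦ 0`; the force between two
letters is minus the product of their charges, so every force in the definition of an aligned
pair, or of attraction, is minus a correlation of two charge sequences at some shift. The charge
sequence of each code word is a sum of runs of `0`s and point charges, so each such correlation
has a closed form, piecewise linear in `k`, the block indices and the shift, whose sign is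
settled by linear arithmetic; two words without a `1` never attract at any shift.
The only negative correlations are at shift zero between `X_a` and the reversal of `Y_a` (or `Y_a`
and the reversal of `X_a`), where the `1` of `X_a` meets the isolated `0` of `Y_a`.
-/

/-- The alphabet Σ = {0, 1, ⋄} of dipole letters. -/
inductive Dip : Type
  | zero : Dip
  | one : Dip
  | blank : Dip
  deriving DecidableEq

open Dip

/-- The force between a pair of letters: 1 if {x,y} = {0,1}, -1 if x = y ∈ {0,1}, 0 otherwise. -/
def lf : Dip → Dip → ℤ
  | zero, one => 1
  | one, zero => 1
  | zero, zero => -1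
  | one, one => -1
  | _, _ => 0

/-- The force between a pair of equal-length words: the sum of letterwise forces. -/
def force (X Y : List Dip) : ℤ := (List.zipWith lf X Y).sum

/-- The length-`i` suffix of a word. -/
def sufx (X : List Dip) (i : ℕ) : List Dip := X.drop (X.length - i)

/-- A pair of equal-length words `X`, `Y` is aligned provided `f(X,Y) ≤ 0` and all proper
prefix/suffix overlaps with `Y` and its reverse have non-positive force. -/
def aligned (X Y : List Dip) : Prop :=
  force X Y ≤ 0 ∧
    ∀ A ∈ [Y, Y.reverse], ∀ i, 1 ≤ i → i ≤ X.length - 1 →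
      force (X.take i) (sufx A i) ≤ 0 ∧ force (sufx X i) (A.take i) ≤ 0

/-- The words `W 1, …, W k` attractively encode the `k`-glue function `g`: every pair is
aligned and `f(Wᵢ, Rev(Wⱼ)) > 0` iff `g i j > 0`. -/
def attEncodes (k : ℕ) (W : ℕ → List Dip) (g : ℕ → ℕ → ℤ) : Prop :=
  (∀ i ∈ Finset.Icc 1 k, ∀ j ∈ Finset.Icc 1 k, aligned (W i) (W j)) ∧
    ∀ i ∈ Finset.Icc 1 k, ∀ j ∈ Finset.Icc 1 k,
      (0 < force (W i) ((W j).reverse) ↔ 0 < g i j)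

-- The canonical signed `2k`-glue function: `g i j = 1` if `{i,j} = {2a-1, 2a}` for some
-- `a ∈ {1,…,k}`, and `0` otherwise.
open Classical in
noncomputable def signedGlue (k : ℕ) (i j : ℕ) : ℤ :=
  if ∃ a ∈ Finset.Icc 1 k, (i = 2 * a - 1 ∧ j = 2 * a) ∨ (i = 2 * a ∧ j = 2 * a - 1)
  then 1 else 0

namespace DipoleCode

def charge : Dip → ℤ
  | zero => 1
  | one => -1
  | blank => 0

theorem lf_eq_neg_charge_mul (x y : Dip) : lf x y = -(charge x * charge y) := by
  cases x <;> cases y <;> rfl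

theorem lf_comm (x y : Dip) : lf x y = lf y x := by
  cases x <;> cases y <;> rfl

def word (n : ℕ) (f : ℕ → Dip) : List Dip := (List.range n).map f

section Words

variable {n : ℕ} {f g : ℕ → Dip}

theorem length_word : (word n f).length = n := by simp [word]

theorem reverse_word : (word n f).reverse = word n fun p => f (n - 1 - p) := by
  apply List.ext_getElem <;> simp [word]

theorem take_word {i : ℕ} (hi : i ≤ n) : (word n f).take i = word i f := by
  apply List.ext_getElem <;> simp [word, List.getElem_take, hi]

theorem sufx_word {i : ℕ} (hi : i ≤ n) : sufx (word n f) i = word i fun j => f (j + (n - i)) := by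
  apply List.ext_getElem
  · simp only [sufx, List.length_drop, length_word]; omega
  · intro j _ _
    simp [sufx, word, Nat.add_comm]

theorem force_word : force (word n f) (word n g) = ∑ j ∈ Finset.range n, lf (f j) (g j) := by
  simp only [force, word, List.zipWith_map, List.zipWith_self]
  rfl

end Words

inductive Block
  | run (lo hi : ℤ)
  | point (w q : ℤ)

namespace Block

def lo : Block → ℤ
  | run lo _ => lo
  | point _ q => q

def hi : Block → ℤ
  | run _ hi => hi
  | point _ q => q + 1

def weight : Block → ℤ
  | run _ _ => 1
  | point w _ => w

def charge (b : Block) (p : ℕ) : ℤ := b.weight * if b.lo ≤ p ∧ p < b.hi then 1 else 0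

def reflect (n : ℤ) : Block → Block
  | run lo hi => run (n - hi) (n - lo)
  | point w q => point w (n - 1 - q)

def overlap (s : ℤ) : Block → Block → ℤ
  | run lo hi, run lo' hi' => max 0 (min (hi - s) hi' - max (lo - s) lo')
  | run lo hi, point w q => w * if lo ≤ q + s ∧ q + s < hi then 1 else 0
  | point w q, run lo hi => w * if lo ≤ q - s ∧ q - s < hi then 1 else 0
  | point w q, point w' q' => w * w' * if q = q' + s then 1 else 0

theorem sum_indicator_mul_indicator (c d c' d' : ℤ) (t s : ℕ) :
    ∑ j ∈ Finset.range t,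
        (if c ≤ ((j + s : ℕ) : ℤ) ∧ ((j + s : ℕ) : ℤ) < d then 1 else 0) *
          (if c' ≤ (j : ℤ) ∧ (j : ℤ) < d' then (1 : ℤ) else 0) =
      max 0 (min (min (d - s) d') t - max (c - s) (max c' 0)) := by
  induction t with
  | zero => simp only [Finset.range_zero, Finset.sum_empty, Nat.cast_zero]; omega
  | succ t ih =>
    rw [Finset.sum_range_succ, ih]
    split_ifs <;> push_cast at * <;> omega

theorem sum_charge_mul_charge {b b' : Block} {n s : ℕ} (hb : b.hi ≤ n) (hb' : 0 ≤ b'.lo)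
    (hs : s ≤ n) :
    ∑ j ∈ Finset.range (n - s), b.charge (j + s) * b'.charge j = overlap s b b' := by
  have hfactor : ∀ j : ℕ, b.charge (j + s) * b'.charge j = b.weight * b'.weight *
      ((if b.lo ≤ ((j + s : ℕ) : ℤ) ∧ ((j + s : ℕ) : ℤ) < b.hi then 1 else 0) *
        (if b'.lo ≤ (j : ℤ) ∧ (j : ℤ) < b'.hi then 1 else 0)) := fun j => by
    simp only [charge]; ring
  simp only [hfactor, ← Finset.mul_sum, sum_indicator_mul_indicator]
  clear hfactor
  push_cast [hs]
  cases b <;> cases b' <;> simp only [overlap, lo, hi, weight, one_mul, mul_one] at hb hb' ⊢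
  all_goals first | omega | (congr 1; split_ifs <;> omega)

theorem charge_reflect (b : Block) {n p : ℕ} (hp : p < n) :
    (b.reflect n).charge p = b.charge (n - 1 - p) := by
  cases b <;> simp only [charge, reflect, lo, hi, weight] <;> congr 1 <;> split_ifs <;> omega

end Block

def chargeOf (P : List Block) (p : ℕ) : ℤ := (P.map (·.charge p)).sum

def corr (n : ℕ) (P Q : List Block) (s : ℕ) : ℤ :=
  ∑ j ∈ Finset.range (n - s), chargeOf P (j + s) * chargeOf Q j

def Fits (n : ℕ) (P : List Block) : Prop := ∀ b ∈ P, 0 ≤ b.lo ∧ b.hi ≤ n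

theorem corr_eq_sum_overlap {n : ℕ} {P Q : List Block} (hP : Fits n P) (hQ : Fits n Q) {s : ℕ}
    (hs : s ≤ n) : corr n P Q s = (P.map fun b => (Q.map fun b' => b.overlap s b').sum).sum := by
  induction P with
  | nil => simp [corr, chargeOf]
  | cons b P ihP =>
    simp only [Fits, List.mem_cons, forall_eq_or_imp] at hP
    simp only [corr, chargeOf, List.map_cons, List.sum_cons, add_mul, Finset.sum_add_distrib]
      at ihP ⊢
    rw [ihP hP.2]
    congr 1
    clear ihP
    induction Q with
    | nil => simp
    | cons b' Q ihQ =>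
      simp only [Fits, List.mem_cons, forall_eq_or_imp] at hQ
      simp only [List.map_cons, List.sum_cons, mul_add, Finset.sum_add_distrib, ihQ hQ.2,
        Block.sum_charge_mul_charge hP.1.2 hQ.1.1 hs]

theorem corr_nonneg {n : ℕ} {P Q : List Block} (hP : ∀ b ∈ P, 0 ≤ b.weight)
    (hQ : ∀ b ∈ Q, 0 ≤ b.weight) (s : ℕ) : 0 ≤ corr n P Q s := by
  have hnonneg : ∀ R : List Block, (∀ b ∈ R, 0 ≤ b.weight) → ∀ p, 0 ≤ chargeOf R p := by
    intro R hR p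
    refine List.sum_nonneg ?_
    simp only [List.mem_map]
    rintro _ ⟨b, hb, rfl⟩
    exact mul_nonneg (hR b hb) (by split_ifs <;> norm_num)
  exact Finset.sum_nonneg fun j _ => mul_nonneg (hnonneg P hP _) (hnonneg Q hQ _)

def reflect (n : ℕ) (P : List Block) : List Block := P.map (Block.reflect n)

theorem chargeOf_reflect (P : List Block) {n p : ℕ} (hp : p < n) :
    chargeOf (reflect n P) p = chargeOf P (n - 1 - p) := by
  simp [chargeOf, reflect, Function.comp_def, Block.charge_reflect _ hp]

theorem Fits.reflect {n : ℕ} {P : List Block} (hP : Fits n P) : Fits n (reflect n P) := by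
  simp only [Fits, DipoleCode.reflect, List.mem_map]
  rintro _ ⟨b, hb, rfl⟩
  have := hP b hb
  cases b <;> simp only [Block.reflect, Block.lo, Block.hi] at this ⊢ <;> omega

section Alignment

variable {n : ℕ} {f g : ℕ → Dip} {P Q : List Block}

theorem sum_lf_eq_neg_corr (hf : ∀ p < n, charge (f p) = chargeOf P p)
    (hg : ∀ p < n, charge (g p) = chargeOf Q p) (s : ℕ) :
    ∑ j ∈ Finset.range (n - s), lf (f (j + s)) (g j) = -corr n P Q s := by
  rw [corr, ← Finset.sum_neg_distrib]
  refine Finset.sum_congr rfl fun j hj => ?_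
  have hj : j < n - s := Finset.mem_range.mp hj
  rw [lf_eq_neg_charge_mul, hf _ (by omega), hg _ (by omega)]

theorem force_word_eq_neg_corr (hf : ∀ p < n, charge (f p) = chargeOf P p)
    (hg : ∀ p < n, charge (g p) = chargeOf Q p) :
    force (word n f) (word n g) = -corr n P Q 0 := by
  rw [force_word, ← sum_lf_eq_neg_corr hf hg]
  rfl

theorem force_sufx_take_word (hf : ∀ p < n, charge (f p) = chargeOf P p)
    (hg : ∀ p < n, charge (g p) = chargeOf Q p) {i : ℕ} (hi : i ≤ n) :
    force (sufx (word n f) i) ((word n g).take i) = -corr n P Q (n - i) := by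
  rw [sufx_word hi, take_word hi, force_word, ← sum_lf_eq_neg_corr hf hg, Nat.sub_sub_self hi]

theorem force_take_sufx_word (hf : ∀ p < n, charge (f p) = chargeOf P p)
    (hg : ∀ p < n, charge (g p) = chargeOf Q p) {i : ℕ} (hi : i ≤ n) :
    force ((word n f).take i) (sufx (word n g) i) = -corr n Q P (n - i) := by
  rw [take_word hi, sufx_word hi, force_word, ← sum_lf_eq_neg_corr hg hf, Nat.sub_sub_self hi]
  exact Finset.sum_congr rfl fun j _ => lf_comm _ _

theorem aligned_word (hf : ∀ p < n, charge (f p) = chargeOf P p)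
    (hg : ∀ p < n, charge (g p) = chargeOf Q p)
    (hPQ : ∀ s ≤ n, 0 ≤ corr n P Q s) (hQP : ∀ s ≤ n, 0 ≤ corr n Q P s)
    (hPQ' : ∀ s, 0 < s → s ≤ n → 0 ≤ corr n P (reflect n Q) s)
    (hQ'P : ∀ s, 0 < s → s ≤ n → 0 ≤ corr n (reflect n Q) P s) :
    aligned (word n f) (word n g) := by
  have hg' : ∀ p < n, charge (g (n - 1 - p)) = chargeOf (reflect n Q) p := fun p hp => by
    rw [chargeOf_reflect Q hp, hg _ (by omega)]
  refine ⟨by simpa [force_word_eq_neg_corr hf hg] using hPQ 0 n.zero_le, ?_⟩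
  intro A hA i hi hin
  rw [length_word] at hin
  simp only [List.mem_cons, List.not_mem_nil, or_false] at hA
  rcases hA with rfl | rfl
  · rw [force_take_sufx_word hf hg (by omega), force_sufx_take_word hf hg (by omega)]
    have := hQP (n - i) (by omega)
    have := hPQ (n - i) (by omega)
    constructor <;> linarith
  · rw [reverse_word, force_take_sufx_word hf hg' (by omega),
      force_sufx_take_word hf hg' (by omega)]
    have := hQ'P (n - i) (by omega) (by omega)
    have := hPQ' (n - i) (by omega) (by omega)
    constructor <;> linarith

end Alignment

/-- `letter k true a` spells `X_a = ⋄^(2k+2) 0^(2a+4) 1 0^(2k+5-2a) ⋄^(2k+2)` and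
`letter k false a` spells `Y_a = 0^(2k+2) ⋄^(2k+5-2a) 0 ⋄^(2a+4) 0^(2k-2) ⋄^4`; word `2a-1` of the
code is `X_a` and word `2a` is `Y_a`. The `1` of `X_a` sits exactly where the reversal of `Y_a`
has its isolated `0`. -/
def letter (k : ℕ) : Bool → ℕ → ℕ → Dip
  | true, a, p => if p = 2 * k + 6 + 2 * a then one
      else if 2 * k + 2 ≤ p ∧ p < 4 * k + 12 then zero else blank
  | false, a, p =>
      if p < 2 * k + 2 ∨ p = 4 * k + 7 - 2 * a ∨ (4 * k + 12 ≤ p ∧ p < 6 * k + 10) then zero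
      else blank

def profile (k : ℕ) : Bool → ℕ → List Block
  | true, a => [.run (2 * k + 2) (4 * k + 12), .point (-2) (2 * k + 6 + 2 * a)]
  | false, a => [.run 0 (2 * k + 2), .point 1 (4 * k + 7 - 2 * a), .run (4 * k + 12) (6 * k + 10)]

theorem charge_letter (k : ℕ) (u : Bool) {a : ℕ} (ha : a ≤ k) (p : ℕ) :
    charge (letter k u a p) = chargeOf (profile k u a) p := by
  cases u <;> simp only [letter, profile, chargeOf, Block.charge, Block.lo, Block.hi,
    Block.weight, List.map_cons, List.map_nil, List.sum_cons, List.sum_nil] <;>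
    split_ifs <;> simp only [charge] <;> omega

theorem fits_profile (k : ℕ) (u : Bool) {a : ℕ} (ha : a ≤ k) :
    Fits (6 * k + 14) (profile k u a) := by
  cases u <;> simp only [Fits, profile, List.mem_cons, List.not_mem_nil, or_false,
    forall_eq_or_imp, forall_eq, Block.lo, Block.hi, le_refl, true_and] <;> omega

section Arithmetic

variable {k a b s : ℕ} (ha₀ : 1 ≤ a) (ha : a ≤ k) (hb₀ : 1 ≤ b) (hb : b ≤ k) (hs : s ≤ 6 * k + 14)
include ha₀ ha hb₀ hb hs

theorem corr_profile_nonneg (u v : Bool) :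
    0 ≤ corr (6 * k + 14) (profile k u a) (profile k v b) s := by
  cases u <;> cases v
  · exact corr_nonneg (by simp [profile, Block.weight]) (by simp [profile, Block.weight]) _
  all_goals
    rw [corr_eq_sum_overlap (fits_profile k _ ha) (fits_profile k _ hb) hs]
    simp only [profile, Block.overlap, List.map_cons, List.map_nil, List.sum_cons, List.sum_nil]
    push_cast [hs]
    split_ifs <;> omega

theorem corr_profile_reflect_nonneg (u v : Bool) (h : 0 < s ∨ a ≠ b ∨ u = v) :
    0 ≤ corr (6 * k + 14) (profile k u a) (reflect (6 * k + 14) (profile k v b)) s := by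
  cases u <;> cases v
  · exact corr_nonneg (by simp [profile, Block.weight])
      (by simp [reflect, profile, Block.reflect, Block.weight]) _
  all_goals
    simp only [Bool.false_eq_true, Bool.true_eq_false, or_false, or_true] at h
    rw [corr_eq_sum_overlap (fits_profile k _ ha) (fits_profile k _ hb).reflect hs]
    simp only [profile, reflect, Block.reflect, Block.overlap, List.map_cons, List.map_nil,
      List.sum_cons, List.sum_nil]
    push_cast [hs]
    split_ifs <;> omega

theorem corr_reflect_profile_nonneg (u v : Bool) (h : 0 < s) :
    0 ≤ corr (6 * k + 14) (reflect (6 * k + 14) (profile k v b)) (profile k u a) s := by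
  cases u <;> cases v
  · exact corr_nonneg (by simp [reflect, profile, Block.reflect, Block.weight])
      (by simp [profile, Block.weight]) _
  all_goals
    rw [corr_eq_sum_overlap (fits_profile k _ hb).reflect (fits_profile k _ ha) hs]
    simp only [profile, reflect, Block.reflect, Block.overlap, List.map_cons, List.map_nil,
      List.sum_cons, List.sum_nil]
    push_cast [hs]
    split_ifs <;> omega

end Arithmetic

theorem corr_profile_reflect_neg {k a : ℕ} (ha : a ≤ k) {u v : Bool} (huv : u ≠ v) :
    corr (6 * k + 14) (profile k u a) (reflect (6 * k + 14) (profile k v a)) 0 < 0 := by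
  cases u <;> cases v <;> simp only [ne_eq, not_true_eq_false] at huv
  all_goals
    rw [corr_eq_sum_overlap (fits_profile k _ ha) (fits_profile k _ ha).reflect (by omega)]
    simp only [profile, reflect, Block.reflect, Block.overlap, List.map_cons, List.map_nil,
      List.sum_cons, List.sum_nil]
    push_cast
    split_ifs <;> omega

def codeWord (k i : ℕ) : List Dip := word (6 * k + 14) (letter k (decide (i % 2 = 1)) ((i + 1) / 2))

section CodeWords

variable {k i j : ℕ} (hi : i ∈ Finset.Icc 1 (2 * k)) (hj : j ∈ Finset.Icc 1 (2 * k))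
include hi hj

theorem aligned_codeWord : aligned (codeWord k i) (codeWord k j) := by
  rw [Finset.mem_Icc] at hi hj
  exact aligned_word (fun p _ => charge_letter k _ (by omega) p)
    (fun p _ => charge_letter k _ (by omega) p)
    (fun s hs => corr_profile_nonneg (by omega) (by omega) (by omega) (by omega) hs _ _)
    (fun s hs => corr_profile_nonneg (by omega) (by omega) (by omega) (by omega) hs _ _)
    (fun s hs₀ hs => corr_profile_reflect_nonneg (by omega) (by omega) (by omega) (by omega) hs
      _ _ (Or.inl hs₀))
    (fun s hs₀ hs => corr_reflect_profile_nonneg (by omega) (by omega) (by omega) (by omega) hs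
      _ _ hs₀)

theorem force_codeWord_reverse_pos_iff :
    0 < force (codeWord k i) (codeWord k j).reverse ↔ (i + 1) / 2 = (j + 1) / 2 ∧ i ≠ j := by
  rw [Finset.mem_Icc] at hi hj
  rw [codeWord, codeWord, reverse_word, force_word_eq_neg_corr
    (fun p _ => charge_letter k _ (by omega) p)
    (fun p hp => by rw [chargeOf_reflect _ hp, charge_letter k _ (by omega)]), neg_pos]
  constructor
  · intro hneg
    by_contra hpartner
    refine (corr_profile_reflect_nonneg (by omega) (by omega) (by omega) (by omega) (by omega)
      _ _ ?_).not_gt hneg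
    rw [decide_eq_decide]
    omega
  · rintro ⟨hblock, hij⟩
    rw [← hblock]
    exact corr_profile_reflect_neg (by omega) (by rw [ne_eq, decide_eq_decide]; omega)

end CodeWords

theorem signedGlue_pos_iff {k i j : ℕ} (hi : i ∈ Finset.Icc 1 (2 * k)) :
    0 < signedGlue k i j ↔ (i + 1) / 2 = (j + 1) / 2 ∧ i ≠ j := by
  rw [Finset.mem_Icc] at hi
  rw [signedGlue]
  split_ifs with h
  · obtain ⟨a, ha, hij⟩ := h
    rw [Finset.mem_Icc] at ha
    simp only [zero_lt_one, true_iff]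
    omega
  · simp only [lt_irrefl, false_iff]
    rintro ⟨hblock, hij⟩
    exact h ⟨(i + 1) / 2, Finset.mem_Icc.mpr ⟨by omega, by omega⟩, by omega⟩

end DipoleCode

theorem stmt0_general (k : ℕ) :
    ∃ W : ℕ → List Dip,
      (∀ i ∈ Finset.Icc 1 (2 * k), (W i).length = 6 * k + 14) ∧
      attEncodes (2 * k) W (signedGlue k) := by
  refine ⟨DipoleCode.codeWord k, fun i _ => DipoleCode.length_word,
    fun i hi j hj => DipoleCode.aligned_codeWord hi hj, fun i hi j hj => ?_⟩
  rw [DipoleCode.force_codeWord_reverse_pos_iff hi hj, DipoleCode.signedGlue_pos_iff hi]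

/-- For every positive integer `k`, there is a set of `2k` dipole words, each of length
`6k+14`, that attractively encodes the canonical signed `2k`-glue function. -/
theorem stmt0 (k : ℕ) (hk : 0 < k) :
    ∃ W : ℕ → List Dip,
      (∀ i ∈ Finset.Icc 1 (2 * k), (W i).length = 6 * k + 14) ∧
      attEncodes (2 * k) W (signedGlue k) :=
  stmt0_general k
end

section
/- Let k and l be positive integers. If for every symmetric function b : {1,…,k}² → {true, false} there exist dipole words W_1, …, W_k, each of length l, such that for all i, j one has f(W_i, Rev(W_j)) > 0 if and only if b(i,j) = true, then 2^{k(k+1)/2} ≤ 3^{kl}. (Consequently, attractively encoding all k-glue sign patterns requires dipole codes of length Ω(k).) -/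
open Dip

/-!
Counting argument: a family of `k` words of length `l` determines the symmetric pattern it
realizes, so realizing all `2^(k(k+1)/2)` symmetric patterns needs at least that many of the
`3^(kl)` word families.
-/

theorem two_pow_card_sym2_le_card_pow {α β : Type*} [Fintype α] [DecidableEq α] [Fintype β]
    (R : β → β → Prop)
    (h : ∀ g : Sym2 α → Bool, ∃ W : α → β, ∀ a c, g s(a, c) = true ↔ R (W a) (W c)) :
    2 ^ Fintype.card (Sym2 α) ≤ Fintype.card β ^ Fintype.card α := by
  choose W hW using h
  have hinj : Function.Injective W := by
    intro g₁ g₂ heq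
    funext s
    induction s using Sym2.ind with
    | _ a c => rw [Bool.eq_iff_iff, hW, hW, heq]
  simpa only [Fintype.card_fun, Fintype.card_bool] using Fintype.card_le_of_injective W hinj

instance : Fintype Dip :=
  ⟨{zero, one, blank}, fun x => by cases x <;> simp⟩

theorem Dip.card : Fintype.card Dip = 3 := rfl

/-- The pattern `g` on `Fin k`, read on the indices `1, …, k`. -/
def extendPattern {k : ℕ} (g : Sym2 (Fin k) → Bool) (i j : ℕ) : Bool :=
  if h : i - 1 < k ∧ j - 1 < k then g s(⟨i - 1, h.1⟩, ⟨j - 1, h.2⟩) else false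

theorem extendPattern_comm {k : ℕ} (g : Sym2 (Fin k) → Bool) (i j : ℕ) :
    extendPattern g i j = extendPattern g j i := by
  unfold extendPattern
  by_cases h : i - 1 < k ∧ j - 1 < k
  · rw [dif_pos h, dif_pos h.symm, Sym2.eq_swap]
  · rw [dif_neg h, dif_neg (mt And.symm h)]

theorem extendPattern_succ {k : ℕ} (g : Sym2 (Fin k) → Bool) (a c : Fin k) :
    extendPattern g (a + 1) (c + 1) = g s(a, c) := by
  simp [extendPattern]

theorem stmt4_general (k l : ℕ)
    (h : ∀ b : ℕ → ℕ → Bool,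
      (∀ i ∈ Finset.Icc 1 k, ∀ j ∈ Finset.Icc 1 k, b i j = b j i) →
      ∃ W : ℕ → List Dip,
        (∀ i ∈ Finset.Icc 1 k, (W i).length = l) ∧
        ∀ i ∈ Finset.Icc 1 k, ∀ j ∈ Finset.Icc 1 k,
          (0 < force (W i) ((W j).reverse) ↔ b i j = true)) :
    2 ^ (k * (k + 1) / 2) ≤ 3 ^ (k * l) := by
  have hmem (a : Fin k) : (a : ℕ) + 1 ∈ Finset.Icc 1 k := by simp [Nat.succ_le_of_lt a.2]
  have realize (g : Sym2 (Fin k) → Bool) : ∃ W : Fin k → List.Vector Dip l, ∀ a c,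
      g s(a, c) = true ↔ 0 < force (W a).toList (W c).toList.reverse := by
    obtain ⟨W, hlen, hforce⟩ := h (extendPattern g) fun i _ j _ => extendPattern_comm g i j
    refine ⟨fun a => ⟨W (a + 1), hlen _ (hmem a)⟩, fun a c => ?_⟩
    exact ((hforce _ (hmem a) _ (hmem c)).trans (by rw [extendPattern_succ])).symm
  have hcard := two_pow_card_sym2_le_card_pow
    (fun u v : List.Vector Dip l => 0 < force u.toList v.toList.reverse) realize
  rwa [Sym2.card, card_vector, Dip.card, Fintype.card_fin, Nat.choose_two_right,
    Nat.add_sub_cancel, mul_comm (k + 1), ← pow_mul, mul_comm l] at hcard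

/-- If every symmetric Boolean pattern on `{1,…,k}²` is realized as the attraction pattern
of some set of `k` dipole words of length `l`, then `2^(k(k+1)/2) ≤ 3^(k·l)`. -/
theorem stmt4 (k l : ℕ) (hk : 0 < k) (hl : 0 < l)
    (h : ∀ b : ℕ → ℕ → Bool,
      (∀ i ∈ Finset.Icc 1 k, ∀ j ∈ Finset.Icc 1 k, b i j = b j i) →
      ∃ W : ℕ → List Dip,
        (∀ i ∈ Finset.Icc 1 k, (W i).length = l) ∧
        ∀ i ∈ Finset.Icc 1 k, ∀ j ∈ Finset.Icc 1 k,
          (0 < force (W i) ((W j).reverse) ↔ b i j = true)) :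
    2 ^ (k * (k + 1) / 2) ≤ 3 ^ (k * l) :=
  stmt4_general k l h
end

section
/- There exists a constant c > 0 such that for every integer k ≥ 2 there exists a set of 2k dipole words of common length at most c·log₂(k) that attractively encodes the canonical signed 2k-glue function. -/
open Dip

/-!
Read the letters `0`, `1`, `⋄` as charges `1`, `-1`, `0`: the force of two letters is minus the
product of their charges, so every force in the statement is minus a correlation of charge
profiles, and "aligned" asks that every overlap correlation be nonnegative.

With `m` bits, all words have length `16m + 33` and come in two shapes around a central block of
`m` slot pairs, a bit string `σ` choosing one cell of each pair. An x-word has charge `+1` on the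
even cells outside the chosen slots and on one odd marker cell. A w-word has charge `+1` on the
odd cells and on the chosen slots, and `-1` on its marker. Reversal complements `σ` and swaps the
two possible marker cells. In any overlap, negative products occur only at the (at most two)
marker cells, and the layout always supplies as many positive products elsewhere, with a single
exception: an x-word against the w-word with the same bit string and the same marker, at zero
shift, correlates to exactly `-1`. Word `2a + 1` is the x-word of the binary code of `a` and word
`2a + 2` the w-word whose reversal carries that code, so `m = ⌊log₂ k⌋ + 3` bits suffice.
-/

namespace Dip

def charge : Dip → ℤ
  | zero => 1
  | one => -1
  | blank => 0

theorem lf_eq_neg_charge_mul (x y : Dip) : lf x y = -(x.charge * y.charge) := by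
  cases x <;> cases y <;> rfl

theorem neg_one_le_charge_mul (x y : Dip) : -1 ≤ x.charge * y.charge := by
  cases x <;> cases y <;> decide

end Dip

theorem Nat.exists_testBit_ne_of_lt_two_pow {a b m : ℕ} (ha : a < 2 ^ m) (hb : b < 2 ^ m)
    (hab : a ≠ b) : ∃ i < m, a.testBit i ≠ b.testBit i := by
  by_contra! h
  refine hab ?_
  rw [← Nat.mod_eq_of_lt ha, ← Nat.mod_eq_of_lt hb]
  refine Nat.eq_of_testBit_eq fun i => ?_
  rw [Nat.testBit_mod_two_pow, Nat.testBit_mod_two_pow]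
  by_cases hi : i < m
  · simp [hi, h i hi]
  · simp [hi]

namespace Finset

variable {ι : Type*} [DecidableEq ι] {s C D : Finset ι} {f : ι → ℤ}

theorem sum_nonneg_of_compensated (hCs : C ⊆ s) (hdisj : Disjoint C D) (hcard : #D ≤ #C)
    (hlow : ∀ t ∈ s, -1 ≤ f t) (hpos : ∀ t ∈ s, t ∉ D → 0 ≤ f t) (hC : ∀ t ∈ C, 1 ≤ f t) :
    0 ≤ ∑ t ∈ s, f t := by
  have hD : -(#D : ℤ) ≤ ∑ t ∈ s ∩ D, f t :=
    calc -(#D : ℤ) ≤ -(#(s ∩ D) : ℤ) := by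
          have := card_le_card (inter_subset_right (s₁ := s) (s₂ := D))
          omega
      _ = ∑ t ∈ s ∩ D, (-1 : ℤ) := by simp
      _ ≤ ∑ t ∈ s ∩ D, f t := sum_le_sum fun t ht => hlow t (mem_inter.1 ht).1
  have hCs' : C ⊆ s \ D := fun t ht => mem_sdiff.2 ⟨hCs ht, disjoint_left.1 hdisj ht⟩
  have hC' : (#C : ℤ) ≤ ∑ t ∈ s \ D, f t :=
    calc (#C : ℤ) = ∑ t ∈ C, (1 : ℤ) := by simp
      _ ≤ ∑ t ∈ C, f t := sum_le_sum hC
      _ ≤ ∑ t ∈ s \ D, f t := sum_le_sum_of_subset_of_nonneg hCs' fun t ht _ =>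
          hpos t (mem_sdiff.1 ht).1 (mem_sdiff.1 ht).2
  rw [← sum_inter_add_sum_sdiff s D f]
  omega

theorem sum_nonneg_of_compensated_twice (hCs : C ⊆ s) (hcard : 2 * #D ≤ #C)
    (hlow : ∀ t ∈ s, -1 ≤ f t) (hpos : ∀ t ∈ s, t ∉ D → 0 ≤ f t)
    (hC : ∀ t ∈ C, t ∉ D → 1 ≤ f t) : 0 ≤ ∑ t ∈ s, f t := by
  refine sum_nonneg_of_compensated (C := C \ D) (sdiff_subset.trans hCs) sdiff_disjoint ?_ hlow
    hpos fun t ht => hC t (mem_sdiff.1 ht).1 (mem_sdiff.1 ht).2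
  have := le_card_sdiff D C
  omega

end Finset

theorem signedGlue_pos_iff {k i j : ℕ} (hi : 1 ≤ i) (hi' : i ≤ 2 * k) (hj : 1 ≤ j) :
    0 < signedGlue k i j ↔ (i - 1) / 2 = (j - 1) / 2 ∧ i % 2 ≠ j % 2 := by
  unfold signedGlue
  split_ifs with h
  · simp only [zero_lt_one, true_iff]
    obtain ⟨a, ha, h | h⟩ := h <;> rw [Finset.mem_Icc] at ha <;> omega
  · simp only [lt_irrefl, false_iff]
    rintro ⟨h1, h2⟩
    exact h ⟨(i + 1) / 2, Finset.mem_Icc.2 ⟨by omega, by omega⟩, by omega⟩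

namespace Dipole

open Finset Dip

def corr (n : ℕ) (u v : ℕ → Dip) (s : ℕ) : ℤ :=
  ∑ t ∈ range (n - s), (u t).charge * (v (t + s)).charge

def rev (n : ℕ) (u : ℕ → Dip) (p : ℕ) : Dip := u (n - 1 - p)

theorem rev_rev {n p : ℕ} (u : ℕ → Dip) (hp : p < n) : rev n (rev n u) p = u p := by
  simp only [rev]
  congr 1
  omega

theorem corr_congr {n s : ℕ} {u u' v v' : ℕ → Dip} (hu : ∀ p < n, u p = u' p)
    (hv : ∀ p < n, v p = v' p) : corr n u v s = corr n u' v' s :=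
  sum_congr rfl fun t ht => by
    rw [mem_range] at ht
    rw [hu t (by omega), hv (t + s) (by omega)]

theorem corr_zero_comm (n : ℕ) (u v : ℕ → Dip) : corr n u v 0 = corr n v u 0 := by
  simp only [corr, add_zero, mul_comm]

theorem corr_rev (n : ℕ) (u v : ℕ → Dip) (s : ℕ) :
    corr n u v s = corr n (rev n v) (rev n u) s := by
  unfold corr rev
  rw [← sum_range_reflect]
  refine sum_congr rfl fun t ht => ?_
  rw [mem_range] at ht
  rw [mul_comm]
  congr 3 <;> omega

theorem corr_zero_rev_comm (n : ℕ) (u v : ℕ → Dip) :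
    corr n u (rev n v) 0 = corr n v (rev n u) 0 := by
  rw [corr_zero_comm, corr_rev, corr_congr (fun p _ => rfl) (fun p hp => rev_rev v hp),
    corr_zero_comm]

def listOf (n : ℕ) (u : ℕ → Dip) : List Dip := (List.range n).map u

@[simp]
theorem length_listOf (n : ℕ) (u : ℕ → Dip) : (listOf n u).length = n := by
  simp [listOf]

theorem reverse_listOf (n : ℕ) (u : ℕ → Dip) : (listOf n u).reverse = listOf n (rev n u) := by
  refine List.ext_getElem (by simp) fun j h1 h2 => ?_
  simp only [listOf, rev, List.getElem_reverse, List.getElem_map, List.getElem_range,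
    List.length_map, List.length_range]

theorem take_listOf {n i : ℕ} (u : ℕ → Dip) (hi : i ≤ n) :
    (listOf n u).take i = listOf i u := by
  rw [listOf, ← List.map_take, List.take_range, Nat.min_eq_left hi, listOf]

theorem sufx_listOf {n i : ℕ} (u : ℕ → Dip) (hi : i ≤ n) :
    sufx (listOf n u) i = listOf i (fun t => u (n - i + t)) := by
  refine List.ext_getElem (by simp only [sufx, List.length_drop, length_listOf]; omega)
    fun j h1 h2 => ?_
  simp [sufx, listOf]

theorem force_listOf (n : ℕ) (u v : ℕ → Dip) :
    force (listOf n u) (listOf n v) = -corr n u v 0 := by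
  rw [force, listOf, listOf, List.zipWith_map, List.zipWith_self,
    ← List.sum_toFinset _ List.nodup_range, List.toFinset_range, corr, Nat.sub_zero,
    ← sum_neg_distrib]
  simp only [Dip.lf_eq_neg_charge_mul, add_zero]

theorem force_take_sufx {n i : ℕ} (u v : ℕ → Dip) (hi : i ≤ n) :
    force ((listOf n u).take i) (sufx (listOf n v) i) = -corr n u v (n - i) := by
  rw [take_listOf u hi, sufx_listOf v hi, force_listOf]
  unfold corr
  rw [Nat.sub_sub_self hi]
  simp only [Nat.sub_zero, add_zero, add_comm]

theorem force_sufx_take {n i : ℕ} (u v : ℕ → Dip) (hi : i ≤ n) :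
    force (sufx (listOf n u) i) ((listOf n v).take i) = -corr n v u (n - i) := by
  rw [take_listOf v hi, sufx_listOf u hi, force_listOf, corr_zero_comm]
  unfold corr
  rw [Nat.sub_sub_self hi]
  simp only [Nat.sub_zero, add_zero, add_comm]

theorem aligned_listOf {n : ℕ} {u v : ℕ → Dip} (h0 : 0 ≤ corr n u v 0)
    (hshift : ∀ w ∈ [v, rev n v], ∀ s, 0 < s → 0 ≤ corr n u w s ∧ 0 ≤ corr n w u s) :
    aligned (listOf n u) (listOf n v) := by
  refine ⟨by rw [force_listOf]; omega, fun A hA i hi1 hi2 => ?_⟩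
  rw [length_listOf] at hi2
  have hw : ∃ w ∈ [v, rev n v], A = listOf n w := by
    simp only [List.mem_cons, List.not_mem_nil, or_false] at hA ⊢
    rcases hA with rfl | rfl
    · exact ⟨v, by simp⟩
    · exact ⟨rev n v, by simp, reverse_listOf n v⟩
  obtain ⟨w, hw, rfl⟩ := hw
  obtain ⟨h1, h2⟩ := hshift w hw (n - i) (by omega)
  rw [force_take_sufx u w (by omega), force_sufx_take u w (by omega)]
  omega

def wordLen (m : ℕ) : ℕ := 16 * m + 33

def marker (m : ℕ) : Bool → ℕ
  | false => 6 * m + 13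
  | true => 10 * m + 19

def slot (m i : ℕ) : Bool → ℕ
  | false => 8 * m + 14 - 2 * i
  | true => 8 * m + 18 + 2 * i

def InSlots (m : ℕ) (σ : ℕ → Bool) (p : ℕ) : Prop := ∃ i < m, p = slot m i (σ i)

instance (m : ℕ) (σ : ℕ → Bool) : DecidablePred (InSlots m σ) := fun _ => by
  unfold InSlots; infer_instance

def xWord (m : ℕ) (σ : ℕ → Bool) (q : Bool) (p : ℕ) : Dip :=
  if p = marker m q then zero else if p % 2 = 0 ∧ ¬InSlots m σ p then zero else blank

def wWord (m : ℕ) (σ : ℕ → Bool) (q : Bool) (p : ℕ) : Dip :=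
  if p = marker m q then one else if p % 2 = 1 ∨ InSlots m σ p then zero else blank

variable {m : ℕ} {σ σ' : ℕ → Bool} {q q' : Bool} {p : ℕ}

theorem marker_eq (m : ℕ) (q : Bool) : marker m q = 6 * m + 13 ∨ marker m q = 10 * m + 19 := by
  cases q <;> simp [marker]

theorem marker_mod_two (m : ℕ) (q : Bool) : marker m q % 2 = 1 := by
  cases q <;> simp only [marker] <;> omega

theorem slot_bounds {i : ℕ} (hi : i < m) (b : Bool) :
    6 * m + 16 ≤ slot m i b ∧ slot m i b ≤ 10 * m + 16 ∧ slot m i b % 2 = 0 := by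
  cases b <;> simp only [slot] <;> omega

theorem slot_injective {i j : ℕ} (hi : i < m) (hj : j < m) {b b' : Bool}
    (h : slot m i b = slot m j b') : i = j ∧ b = b' := by
  cases b <;> cases b' <;>
    simp only [slot, and_true, Bool.false_eq_true, Bool.true_eq_false, and_false] at h ⊢ <;> omega

theorem InSlots.bounds (h : InSlots m σ p) :
    6 * m + 16 ≤ p ∧ p ≤ 10 * m + 16 ∧ p % 2 = 0 := by
  obtain ⟨i, hi, rfl⟩ := h
  exact slot_bounds hi _

theorem not_inSlots_of_lt (h : p < 6 * m + 16) : ¬InSlots m σ p := fun hp => by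
  have := hp.bounds
  omega

theorem not_inSlots_of_gt (h : 10 * m + 16 < p) : ¬InSlots m σ p := fun hp => by
  have := hp.bounds
  omega

theorem inSlots_slot_iff {i : ℕ} (hi : i < m) {b : Bool} :
    InSlots m σ (slot m i b) ↔ σ i = b := by
  refine ⟨fun ⟨j, hj, h⟩ => ?_, fun h => ⟨i, hi, h ▸ rfl⟩⟩
  obtain ⟨rfl, rfl⟩ := slot_injective hi hj h
  rfl

theorem charge_xWord_nonneg (m : ℕ) (σ : ℕ → Bool) (q : Bool) (p : ℕ) :
    0 ≤ (xWord m σ q p).charge := by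
  unfold xWord; split_ifs <;> decide

theorem charge_wWord_nonneg (h : p ≠ marker m q) : 0 ≤ (wWord m σ q p).charge := by
  rw [wWord, if_neg h]; split_ifs <;> decide

theorem xWord_of_odd (hp : p % 2 = 1) (h : p ≠ marker m q) : xWord m σ q p = blank := by
  simp [xWord, h, hp]

theorem xWord_of_inSlots (h : InSlots m σ p) : xWord m σ q p = blank := by
  have := marker_mod_two m q
  have := h.bounds
  rw [xWord, if_neg (show p ≠ marker m q by omega), if_neg fun h' => h'.2 h]

theorem xWord_of_even (hp : p % 2 = 0) (h : ¬InSlots m σ p) : xWord m σ q p = zero := by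
  simp [xWord, hp, h]

theorem wWord_of_odd (hp : p % 2 = 1) (h : p ≠ marker m q) : wWord m σ q p = zero := by
  simp [wWord, h, hp]

theorem wWord_of_inSlots (h : InSlots m σ p) : wWord m σ q p = zero := by
  have := marker_mod_two m q
  have := h.bounds
  rw [wWord, if_neg (show p ≠ marker m q by omega), if_pos (.inr h)]

theorem wWord_of_even (hp : p % 2 = 0) (h : ¬InSlots m σ p) : wWord m σ q p = blank := by
  have := marker_mod_two m q
  rw [wWord, if_neg (show p ≠ marker m q by omega), if_neg (not_or.2 ⟨by omega, h⟩)]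

theorem corr_xWord_xWord_nonneg (n : ℕ) (σ σ' : ℕ → Bool) (q q' : Bool) (s : ℕ) :
    0 ≤ corr n (xWord m σ q) (xWord m σ' q') s :=
  sum_nonneg fun _ _ => mul_nonneg (charge_xWord_nonneg ..) (charge_xWord_nonneg ..)

theorem eq_of_marker_add_eq {s : ℕ} (h : marker m q + s = marker m q') :
    (s = 0 ∧ q = q') ∨ (q = false ∧ q' = true ∧ s = 4 * m + 6) := by
  cases q <;> cases q' <;> simp only [marker] at h <;> simp <;> omega

theorem corr_xWord_wWord_nonneg_of_even {n s : ℕ} (hs : s % 2 = 0)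
    (hcol : marker m q + s ≠ marker m q') :
    0 ≤ corr n (xWord m σ q) (wWord m σ' q') s := by
  have := marker_mod_two m q'
  refine sum_nonneg fun t _ => ?_
  by_cases ht : t + s = marker m q'
  · rw [xWord_of_odd (p := t) (by omega) (by rintro rfl; exact hcol ht)]
    simp [charge]
  · exact mul_nonneg (charge_xWord_nonneg ..) (charge_wWord_nonneg ht)

-- At the one even shift where the markers meet, slot `0` of `σ'` lies over an even cell of the
-- x-word to the left of all slots.
theorem corr_xWord_wWord_marker_shift_nonneg (hm : 1 ≤ m) :
    0 ≤ corr (wordLen m) (xWord m σ false) (wWord m σ' true) (4 * m + 6) := by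
  have hslot := slot_bounds hm (σ' 0)
  refine sum_nonneg_of_compensated (C := {slot m 0 (σ' 0) - (4 * m + 6)})
    (D := {6 * m + 13}) ?_ ?_ (by simp) (fun _ _ => neg_one_le_charge_mul _ _) ?_ ?_
  · simp only [singleton_subset_iff, mem_range, wordLen]; omega
  · simp only [disjoint_singleton]; omega
  · intro t _ ht
    simp only [mem_singleton] at ht
    exact mul_nonneg (charge_xWord_nonneg ..)
      (charge_wWord_nonneg (by simp only [marker]; omega))
  · simp only [mem_singleton, forall_eq]
    rw [xWord_of_even (by omega) (not_inSlots_of_lt (by omega)),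
      Nat.sub_add_cancel (by omega), wWord_of_inSlots ⟨0, hm, rfl⟩]
    decide

theorem corr_xWord_wWord_nonneg_of_odd {s : ℕ} (hs : s % 2 = 1) :
    0 ≤ corr (wordLen m) (xWord m σ q) (wWord m σ' q') s := by
  have := marker_eq m q'
  by_cases hbig : marker m q' < s
  · exact sum_nonneg fun t _ =>
      mul_nonneg (charge_xWord_nonneg ..) (charge_wWord_nonneg (by omega))
  refine sum_nonneg_of_compensated_twice (C := {2, 4}) (D := {marker m q' - s}) ?_ (by simp)
    (fun _ _ => neg_one_le_charge_mul _ _) ?_ ?_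
  · intro t ht
    simp only [mem_insert, mem_singleton, mem_range, wordLen] at ht ⊢
    omega
  · intro t _ ht
    simp only [mem_singleton] at ht
    exact mul_nonneg (charge_xWord_nonneg ..) (charge_wWord_nonneg (by omega))
  · intro t ht htD
    simp only [mem_insert, mem_singleton] at ht htD
    rw [xWord_of_even (p := t) (by omega) (not_inSlots_of_lt (by omega)),
      wWord_of_odd (p := t + s) (by omega) (by omega)]
    decide

theorem corr_xWord_wWord_nonneg (hm : 1 ≤ m) {s : ℕ} (h : s ≠ 0 ∨ q ≠ q') :
    0 ≤ corr (wordLen m) (xWord m σ q) (wWord m σ' q') s := by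
  rcases Nat.mod_two_eq_zero_or_one s with hs | hs
  · by_cases hcol : marker m q + s = marker m q'
    · rcases eq_of_marker_add_eq hcol with ⟨rfl, rfl⟩ | ⟨rfl, rfl, rfl⟩
      · simp at h
      · exact corr_xWord_wWord_marker_shift_nonneg hm
    · exact corr_xWord_wWord_nonneg_of_even hs hcol
  · exact corr_xWord_wWord_nonneg_of_odd hs

theorem corr_wWord_wWord_nonneg_of_even {s : ℕ} (hs : s % 2 = 0) :
    0 ≤ corr (wordLen m) (wWord m σ q) (wWord m σ' q') s := by
  have := marker_eq m q
  have := marker_eq m q'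
  by_cases hbig : 10 * m + 19 < s
  · refine sum_nonneg fun t ht => ?_
    simp only [mem_range, wordLen] at ht
    exact mul_nonneg (charge_wWord_nonneg (by omega)) (charge_wWord_nonneg (by omega))
  refine sum_nonneg_of_compensated_twice (C := {1, 3, 5, 7}) (D := {marker m q, marker m q' - s})
    ?_ (by grw [card_le_two]; rfl) (fun _ _ => neg_one_le_charge_mul _ _) ?_ ?_
  · intro t ht
    simp only [mem_insert, mem_singleton, mem_range, wordLen] at ht ⊢
    omega
  · intro t _ ht
    simp only [mem_insert, mem_singleton, not_or] at ht
    exact mul_nonneg (charge_wWord_nonneg ht.1) (charge_wWord_nonneg (by omega))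
  · intro t ht htD
    simp only [mem_insert, mem_singleton, not_or] at ht htD
    rw [wWord_of_odd (p := t) (by omega) htD.1, wWord_of_odd (p := t + s) (by omega) (by omega)]
    decide

-- Odd shifts carry the `m ≥ 4` chosen slots of `σ` onto odd cells of the second word.
theorem corr_wWord_wWord_nonneg_of_odd (hm : 4 ≤ m) {s : ℕ} (hs : s % 2 = 1) :
    0 ≤ corr (wordLen m) (wWord m σ q) (wWord m σ' q') s := by
  have := marker_eq m q
  have := marker_eq m q'
  by_cases hbig : 4 * m + 3 < s
  · refine sum_nonneg fun t ht => ?_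
    by_cases ht1 : t = marker m q
    · rw [wWord_of_even (p := t + s) (by omega) (not_inSlots_of_gt (by omega))]
      simp [charge]
    by_cases ht2 : t + s = marker m q'
    · rw [wWord_of_even (p := t) (by omega) (not_inSlots_of_lt (by omega))]
      simp [charge]
    exact mul_nonneg (charge_wWord_nonneg ht1) (charge_wWord_nonneg ht2)
  refine sum_nonneg_of_compensated_twice (C := (range m).image fun i => slot m i (σ i))
    (D := {marker m q, marker m q' - s}) ?_ ?_ (fun _ _ => neg_one_le_charge_mul _ _) ?_ ?_
  · intro t ht
    obtain ⟨i, hi, rfl⟩ := mem_image.1 ht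
    have := slot_bounds (mem_range.1 hi) (σ i)
    simp only [mem_range, wordLen]
    omega
  · rw [card_image_of_injOn fun i hi j hj h =>
      (slot_injective (mem_range.1 hi) (mem_range.1 hj) h).1, card_range]
    grw [card_le_two]
    omega
  · intro t _ ht
    simp only [mem_insert, mem_singleton, not_or] at ht
    exact mul_nonneg (charge_wWord_nonneg ht.1) (charge_wWord_nonneg (by omega))
  · intro t ht htD
    obtain ⟨i, hi, rfl⟩ := mem_image.1 ht
    have := slot_bounds (mem_range.1 hi) (σ i)
    simp only [mem_insert, mem_singleton, not_or] at htD
    rw [wWord_of_inSlots ⟨i, mem_range.1 hi, rfl⟩, wWord_of_odd (by omega) (by omega)]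
    decide

theorem corr_wWord_wWord_nonneg (hm : 4 ≤ m) (σ σ' : ℕ → Bool) (q q' : Bool) (s : ℕ) :
    0 ≤ corr (wordLen m) (wWord m σ q) (wWord m σ' q') s := by
  rcases Nat.mod_two_eq_zero_or_one s with hs | hs
  · exact corr_wWord_wWord_nonneg_of_even hs
  · exact corr_wWord_wWord_nonneg_of_odd hm hs

theorem reflect_eq_marker_iff :
    wordLen m - 1 - p = marker m q ↔ p = marker m (!q) := by
  cases q <;> simp only [marker, wordLen, Bool.not_false, Bool.not_true] <;> omega

theorem reflect_inSlots_iff :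
    InSlots m σ (wordLen m - 1 - p) ↔ InSlots m (fun i => !σ i) p := by
  refine exists_congr fun i => and_congr_right fun hi => ?_
  show _ ↔ p = slot m i (!σ i)
  cases σ i <;> simp only [slot, wordLen, Bool.not_false, Bool.not_true] <;> omega

theorem reflect_mod_two (hp : p < wordLen m) : (wordLen m - 1 - p) % 2 = p % 2 := by
  simp only [wordLen] at hp ⊢
  omega

theorem rev_xWord (hp : p < wordLen m) :
    rev (wordLen m) (xWord m σ q) p = xWord m (fun i => !σ i) (!q) p := by
  simp only [rev, xWord, reflect_eq_marker_iff, reflect_inSlots_iff, reflect_mod_two hp]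

theorem rev_wWord (hp : p < wordLen m) :
    rev (wordLen m) (wWord m σ q) p = wWord m (fun i => !σ i) (!q) p := by
  simp only [rev, wWord, reflect_eq_marker_iff, reflect_inSlots_iff, reflect_mod_two hp]

theorem corr_wWord_xWord_nonneg (hm : 1 ≤ m) {s : ℕ} (h : s ≠ 0 ∨ q ≠ q') :
    0 ≤ corr (wordLen m) (wWord m σ q) (xWord m σ' q') s := by
  rw [corr_rev, corr_congr (fun _ hp => rev_xWord hp) (fun _ hp => rev_wWord hp)]
  exact corr_xWord_wWord_nonneg hm (by cases q <;> cases q' <;> simp_all)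

theorem corr_xWord_wWord_self (σ : ℕ → Bool) (q : Bool) :
    corr (wordLen m) (xWord m σ q) (wWord m σ q) 0 = -1 := by
  have hq := marker_eq m q
  rw [corr, Nat.sub_zero,
    sum_eq_single_of_mem (marker m q) (by simp only [mem_range, wordLen]; omega)]
  · simp [xWord, wWord, charge]
  · intro t _ ht
    rcases Nat.mod_two_eq_zero_or_one t with he | ho
    · by_cases hS : InSlots m σ t
      · simp [xWord_of_inSlots hS, charge]
      · simp [wWord_of_even he hS, charge]
    · simp [xWord_of_odd ho ht, charge]

theorem corr_xWord_wWord_zero_nonneg {i : ℕ} (hi : i < m) (hσ : σ i ≠ σ' i) (q : Bool) :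
    0 ≤ corr (wordLen m) (xWord m σ q) (wWord m σ' q) 0 := by
  have hq := marker_eq m q
  have hslot := slot_bounds hi (σ' i)
  refine sum_nonneg_of_compensated (C := {slot m i (σ' i)}) (D := {marker m q}) ?_ ?_ (by simp)
    (fun _ _ => neg_one_le_charge_mul _ _) ?_ ?_
  · simp only [singleton_subset_iff, mem_range, wordLen]; omega
  · simp only [disjoint_singleton]; omega
  · intro t _ ht
    simp only [mem_singleton] at ht
    exact mul_nonneg (charge_xWord_nonneg ..) (charge_wWord_nonneg ht)
  · simp only [mem_singleton, forall_eq, add_zero]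
    rw [xWord_of_even hslot.2.2 ((inSlots_slot_iff hi).not.2 hσ), wWord_of_inSlots ⟨i, hi, rfl⟩]
    decide

def IsGadget (m : ℕ) (u : ℕ → Dip) : Prop := ∃ σ q, u = xWord m σ q ∨ u = wWord m σ q

theorem IsGadget.corr_nonneg (hm : 4 ≤ m) {u v : ℕ → Dip} (hu : IsGadget m u)
    (hv : IsGadget m v) {s : ℕ} (hs : 0 < s) : 0 ≤ corr (wordLen m) u v s := by
  obtain ⟨σ, q, rfl | rfl⟩ := hu <;> obtain ⟨σ', q', rfl | rfl⟩ := hv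
  · exact corr_xWord_xWord_nonneg ..
  · exact corr_xWord_wWord_nonneg (by omega) (.inl hs.ne')
  · exact corr_wWord_xWord_nonneg (by omega) (.inl hs.ne')
  · exact corr_wWord_wWord_nonneg hm ..

theorem IsGadget.exists_rev {u : ℕ → Dip} (hu : IsGadget m u) :
    ∃ w, IsGadget m w ∧ ∀ p < wordLen m, rev (wordLen m) u p = w p := by
  obtain ⟨σ, q, rfl | rfl⟩ := hu
  · exact ⟨_, ⟨_, _, .inl rfl⟩, fun _ hp => rev_xWord hp⟩
  · exact ⟨_, ⟨_, _, .inr rfl⟩, fun _ hp => rev_wWord hp⟩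

theorem IsGadget.aligned_listOf (hm : 4 ≤ m) {u v : ℕ → Dip} (hu : IsGadget m u)
    (hv : IsGadget m v) (h0 : 0 ≤ corr (wordLen m) u v 0) :
    aligned (listOf (wordLen m) u) (listOf (wordLen m) v) := by
  obtain ⟨w, hw, hrev⟩ := hv.exists_rev
  refine Dipole.aligned_listOf h0 fun w' hw' s hs => ?_
  simp only [List.mem_cons, List.not_mem_nil, or_false] at hw'
  rcases hw' with rfl | rfl
  · exact ⟨hu.corr_nonneg hm hv hs, hv.corr_nonneg hm hu hs⟩
  · rw [corr_congr (fun _ _ => rfl) hrev, corr_congr hrev (fun _ _ => rfl)]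
    exact ⟨hu.corr_nonneg hm hw hs, hw.corr_nonneg hm hu hs⟩

def encWord (m i : ℕ) : ℕ → Dip :=
  if i % 2 = 1 then xWord m ((i - 1) / 2).testBit false
  else wWord m (fun j => !((i - 1) / 2).testBit j) true

theorem isGadget_encWord (m i : ℕ) : IsGadget m (encWord m i) := by
  unfold encWord
  split_ifs
  · exact ⟨_, _, .inl rfl⟩
  · exact ⟨_, _, .inr rfl⟩

theorem corr_encWord_nonneg (hm : 4 ≤ m) (i j : ℕ) :
    0 ≤ corr (wordLen m) (encWord m i) (encWord m j) 0 := by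
  unfold encWord
  split_ifs
  · exact corr_xWord_xWord_nonneg ..
  · exact corr_xWord_wWord_nonneg (by omega) (.inr (by decide))
  · exact corr_wWord_xWord_nonneg (by omega) (.inr (by decide))
  · exact corr_wWord_wWord_nonneg hm ..

theorem corr_xWord_rev_wWord_neg_iff {a b : ℕ} (ha : a < 2 ^ m) (hb : b < 2 ^ m) :
    corr (wordLen m) (xWord m a.testBit false)
      (rev (wordLen m) (wWord m (fun j => !b.testBit j) true)) 0 < 0 ↔ a = b := by
  rw [corr_congr (fun _ _ => rfl) (fun _ hp => rev_wWord hp)]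
  simp only [Bool.not_not, Bool.not_true]
  refine ⟨fun h => ?_, fun h => by rw [h, corr_xWord_wWord_self]; norm_num⟩
  by_contra hab
  obtain ⟨i, hi, hne⟩ := Nat.exists_testBit_ne_of_lt_two_pow ha hb hab
  exact (corr_xWord_wWord_zero_nonneg hi hne false).not_gt h

theorem corr_encWord_rev_neg_iff (hm : 4 ≤ m) {i j : ℕ} (hi : (i - 1) / 2 < 2 ^ m)
    (hj : (j - 1) / 2 < 2 ^ m) :
    corr (wordLen m) (encWord m i) (rev (wordLen m) (encWord m j)) 0 < 0 ↔
      (i - 1) / 2 = (j - 1) / 2 ∧ i % 2 ≠ j % 2 := by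
  rcases Nat.mod_two_eq_zero_or_one i with hi2 | hi2 <;>
    rcases Nat.mod_two_eq_zero_or_one j with hj2 | hj2
  · simp only [encWord, hi2, hj2, zero_ne_one, if_false, ne_eq, not_true_eq_false, and_false,
      iff_false, not_lt]
    rw [corr_congr (fun _ _ => rfl) (fun _ hp => rev_wWord hp)]
    exact corr_wWord_wWord_nonneg hm ..
  · rw [corr_zero_rev_comm]
    simp only [encWord, hi2, hj2, zero_ne_one, if_false, if_true]
    rw [corr_xWord_rev_wWord_neg_iff hj hi]
    omega
  · simp only [encWord, hi2, hj2, zero_ne_one, if_false, if_true]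
    rw [corr_xWord_rev_wWord_neg_iff hi hj]
    omega
  · simp only [encWord, hi2, hj2, if_true, ne_eq, not_true_eq_false, and_false, iff_false, not_lt]
    rw [corr_congr (fun _ _ => rfl) (fun _ hp => rev_xWord hp)]
    exact corr_xWord_xWord_nonneg ..

theorem attEncodes_encWord {k : ℕ} (hm : 4 ≤ m) (hk : k ≤ 2 ^ m) :
    attEncodes (2 * k) (fun i => listOf (wordLen m) (encWord m i)) (signedGlue k) := by
  refine ⟨fun i _ j _ => (isGadget_encWord m i).aligned_listOf hm (isGadget_encWord m j)
    (corr_encWord_nonneg hm i j), fun i hi j hj => ?_⟩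
  rw [mem_Icc] at hi hj
  rw [reverse_listOf, force_listOf, neg_pos, signedGlue_pos_iff hi.1 hi.2 hj.1,
    corr_encWord_rev_neg_iff hm (by omega) (by omega)]

theorem wordLen_log_le {k : ℕ} (hk : 2 ≤ k) :
    (wordLen (Nat.log 2 k + 3) : ℝ) ≤ 97 * Real.logb 2 k := by
  have hlog : (Nat.log 2 k : ℝ) ≤ Real.logb 2 k := by exact_mod_cast Real.natLog_le_logb k 2
  have hpos : (1 : ℝ) ≤ Nat.log 2 k := by exact_mod_cast Nat.log_pos one_lt_two hk
  simp only [wordLen]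
  push_cast
  linarith

end Dipole

/-- There is a constant `c > 0` such that for every `k ≥ 2` there is a set of `2k` dipole
words of common length at most `c·log₂ k` that attractively encodes the canonical signed
`2k`-glue function. -/
theorem stmt7 :
    ∃ c : ℝ, 0 < c ∧ ∀ k : ℕ, 2 ≤ k →
      ∃ (l : ℕ) (W : ℕ → List Dip),
        (l : ℝ) ≤ c * Real.logb 2 k ∧
        (∀ i ∈ Finset.Icc 1 (2 * k), (W i).length = l) ∧
        attEncodes (2 * k) W (signedGlue k) := by
  refine ⟨97, by norm_num, fun k hk => ?_⟩
  have hm : 4 ≤ Nat.log 2 k + 3 := Nat.add_le_add_right (Nat.log_pos one_lt_two hk) 3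
  have hk' : k ≤ 2 ^ (Nat.log 2 k + 3) :=
    (Nat.lt_pow_succ_log_self one_lt_two k).le.trans (Nat.pow_le_pow_right two_pos (by omega))
  exact ⟨_, _, Dipole.wordLen_log_le hk, fun _ _ => Dipole.length_listOf ..,
    Dipole.attEncodes_encWord hm hk'⟩
end

section
/- Let k be a positive integer and let W_1, …, W_{2k} be the dipole words defined by W_{2a−1} = ⋄^{2k+5} 1 1 (⋄1)^{a−1} (1⋄) (⋄1)^{k−a} 1 ⋄^{2k+6} and W_{2a} = 1^{2k+6} 0 (⋄⋄)^{k−a} (1⋄) (⋄⋄)^{a−1} ⋄ ⋄ 1^{2k+5} for a ∈ {1,…,k}. Then for all a, b ∈ {1,…,k}, f(W_{2a−1}, Rev(W_{2b})) = 1 if a = b, and f(W_{2a−1}, Rev(W_{2b})) = 0 if a ≠ b. -/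
open Dip

/-- `n` repetitions of a letter. -/
def rep (n : ℕ) (x : Dip) : List Dip := List.replicate n x

/-- `n` repetitions of a word. -/
def rep2 (n : ℕ) (p : List Dip) : List Dip := (List.replicate n p).flatten

/-- `W_{2a-1} = ⋄^{2k+5} 1 1 (⋄1)^{a-1} (1⋄) (⋄1)^{k-a} 1 ⋄^{2k+6}`. -/
def Wodd (k a : ℕ) : List Dip :=
  rep (2 * k + 5) blank ++ [one, one] ++ rep2 (a - 1) [blank, one] ++ [one, blank] ++
    rep2 (k - a) [blank, one] ++ [one] ++ rep (2 * k + 6) blank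

/-- `W_{2a} = 1^{2k+6} 0 (⋄⋄)^{k-a} (1⋄) (⋄⋄)^{a-1} ⋄ ⋄ 1^{2k+5}`. -/
def Weven (k a : ℕ) : List Dip :=
  rep (2 * k + 6) one ++ [zero] ++ rep2 (k - a) [blank, blank] ++ [one, blank] ++
    rep2 (a - 1) [blank, blank] ++ [blank, blank] ++ rep (2 * k + 5) one

/-! Aligned letter by letter, the blank blocks of `W_{2a-1}` and of `Rev(W_{2b})` kill every
contribution outside their central cores of length `2k`, except the pair `(1, 0)` right after
them, which contributes `1`. Inside the core, `Rev(W_{2b})` is blank except for a single `1` at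
position `2b - 1`; there `W_{2a-1}` has a `1` (force `-1`) unless `a = b`, when the shifted pair
`1⋄` puts a `⋄` in that place. -/

open Dip

@[simp] lemma lf_blank_left (y : Dip) : lf blank y = 0 := by cases y <;> rfl

@[simp] lemma lf_blank_right (x : Dip) : lf x blank = 0 := by cases x <;> rfl

@[simp] lemma force_nil_left (Y : List Dip) : force [] Y = 0 := rfl

@[simp] lemma force_nil_right (X : List Dip) : force X [] = 0 := by cases X <;> rfl

@[simp] lemma force_cons_cons (x y : Dip) (X Y : List Dip) :
    force (x :: X) (y :: Y) = lf x y + force X Y := by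
  simp [force]

lemma force_append {X₁ X₂ Y₁ Y₂ : List Dip} (h : X₁.length = Y₁.length) :
    force (X₁ ++ X₂) (Y₁ ++ Y₂) = force X₁ Y₁ + force X₂ Y₂ := by
  simp only [force, List.zipWith_append h, List.sum_append]

@[simp] lemma force_replicate_blank_left (n : ℕ) (Y : List Dip) :
    force (List.replicate n blank) Y = 0 := by
  induction n generalizing Y with
  | zero => rfl
  | succ n ih => cases Y <;> simp [List.replicate_succ, ih]

@[simp] lemma force_replicate_blank_right (X : List Dip) (n : ℕ) :
    force X (List.replicate n blank) = 0 := by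
  induction n generalizing X with
  | zero => simp
  | succ n ih => cases X <;> simp [List.replicate_succ, ih]

lemma force_append_cons_of_single {X Z : List Dip} {m : ℕ} (hX : X.length = m) (x y : Dip)
    (n : ℕ) :
    force (X ++ x :: Z) (List.replicate m blank ++ y :: List.replicate n blank) = lf x y := by
  rw [force_append (Y₁ := List.replicate m blank) (by simp [hX])]
  simp

@[simp] lemma length_rep2 (n : ℕ) (p : List Dip) : (rep2 n p).length = n * p.length := by
  simp [rep2]

lemma rep2_add (m n : ℕ) (p : List Dip) : rep2 (m + n) p = rep2 m p ++ rep2 n p := by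
  rw [rep2, rep2, rep2, List.replicate_add, List.flatten_append]

lemma rep2_blank_blank (n : ℕ) : rep2 n [blank, blank] = List.replicate (2 * n) blank := by
  induction n with
  | zero => rfl
  | succ n ih =>
    rw [rep2_add, ih, show 2 * (n + 1) = 2 * n + 2 by ring, List.replicate_add]
    rfl

def oddCore (k a : ℕ) : List Dip :=
  rep2 (a - 1) [blank, one] ++ [one, blank] ++ rep2 (k - a) [blank, one]

lemma Wodd_eq (k a : ℕ) :
    Wodd k a = rep (2 * k + 5) blank ++ [one, one] ++ oddCore k a ++ [one] ++
      rep (2 * k + 6) blank := by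
  simp [Wodd, oddCore]

lemma Weven_reverse {k b : ℕ} (hb : 1 ≤ b) :
    (Weven k b).reverse = rep (2 * k + 5) one ++ [blank, blank] ++
      (List.replicate (2 * b - 1) blank ++ one :: List.replicate (2 * (k - b)) blank) ++
      [zero] ++ rep (2 * k + 6) one := by
  obtain ⟨b, rfl⟩ := Nat.exists_eq_add_of_le' hb
  rw [show 2 * (b + 1) - 1 = 2 * b + 1 by omega, List.replicate_succ' (n := 2 * b)]
  simp [Weven, rep, rep2_blank_blank]

lemma force_Wodd_Weven_reverse {k a b : ℕ} (ha : 1 ≤ a) (hak : a ≤ k) (hb : 1 ≤ b)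
    (hbk : b ≤ k) :
    force (Wodd k a) (Weven k b).reverse =
      force (oddCore k a) (List.replicate (2 * b - 1) blank ++
        one :: List.replicate (2 * (k - b)) blank) + 1 := by
  rw [Wodd_eq, Weven_reverse hb, force_append (by simp [oddCore, rep]; omega), force_append (by simp [oddCore, rep]; omega),
    force_append (by simp [rep]), force_append (by simp [rep])]
  simp [rep, lf]

lemma force_oddCore {k a b : ℕ} (ha : 1 ≤ a) (hb : 1 ≤ b) (hbk : b ≤ k) :
    force (oddCore k a) (List.replicate (2 * b - 1) blank ++
      one :: List.replicate (2 * (k - b)) blank) = if a = b then 0 else -1 := by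
  rcases lt_trichotomy b a with hlt | rfl | hgt
  · obtain ⟨c, hc⟩ := Nat.exists_eq_add_of_lt hlt
    have : oddCore k a = (rep2 (b - 1) [blank, one] ++ [blank]) ++
        one :: (rep2 c [blank, one] ++ [one, blank] ++ rep2 (k - a) [blank, one]) := by
      rw [oddCore, show a - 1 = b - 1 + 1 + c by omega, rep2_add, rep2_add]
      simp [rep2]
    rw [this, force_append_cons_of_single (by simp; omega), if_neg hlt.ne']
    rfl
  · have : oddCore k b = (rep2 (b - 1) [blank, one] ++ [one]) ++
        blank :: rep2 (k - b) [blank, one] := by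
      simp [oddCore]
    rw [this, force_append_cons_of_single (by simp; omega), if_pos rfl]
    rfl
  · obtain ⟨c, hc⟩ := Nat.exists_eq_add_of_lt hgt
    have : oddCore k a =
        (rep2 (a - 1) [blank, one] ++ [one, blank] ++ rep2 c [blank, one] ++ [blank]) ++
        one :: rep2 (k - b) [blank, one] := by
      rw [oddCore, show k - a = c + 1 + (k - b) by omega, rep2_add, rep2_add]
      simp [rep2]
    rw [this, force_append_cons_of_single (by simp; omega), if_neg hgt.ne]
    rfl

theorem stmt8_general (k : ℕ) :
    ∀ a ∈ Finset.Icc 1 k, ∀ b ∈ Finset.Icc 1 k,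
      force (Wodd k a) ((Weven k b).reverse) = if a = b then 1 else 0 := by
  intro a ha b hb
  rw [Finset.mem_Icc] at ha hb
  rw [force_Wodd_Weven_reverse ha.1 ha.2 hb.1 hb.2, force_oddCore ha.1 hb.1 hb.2]
  split_ifs <;> rfl

/-- Force between the warmup words: `f(W_{2a-1}, Rev(W_{2b})) = 1` if `a = b` and `0`
otherwise. -/
theorem stmt8 (k : ℕ) (hk : 0 < k) :
    ∀ a ∈ Finset.Icc 1 k, ∀ b ∈ Finset.Icc 1 k,
      force (Wodd k a) ((Weven k b).reverse) = if a = b then 1 else 0 :=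
  stmt8_general k
end
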